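/- The Lagrangian L is a density of weight one under linear reparameterizations: for any invertible 2×2 real matrix M = (m_{αβ}) acting on the pair of derivative vectors, i.e. replacing (Ṫ, Ẏ) by (m₀₀Ṫ + m₀₁T', m₀₀Ẏ + m₀₁Y') and (T', Y') by (m₁₀Ṫ + m₁₁T', m₁₀Ẏ + m₁₁Y'), the value of L is multiplied by |det M|. -/
import Mathlib


open scoped RealInnerProductSpace

/-- Squared area density A² of the nonrelativistic string. -/
noncomputable def A2 {n : ℕ} (td ts : ℝ) (u v : EuclideanSpace ℝ (Fin n)) : ℝ :=
  td ^ 2 * ‖v‖ ^ 2 + ts ^ 2 * ‖u‖ ^ 2 - 2 * td * ts * ⟪u, v⟫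

/-- The nonrelativistic string Lagrangian. -/
noncomputable def Lns {n : ℕ} (ρ td ts : ℝ) (u v : EuclideanSpace ℝ (Fin n)) : ℝ :=
  ρ * ((‖u‖ ^ 2 * ‖v‖ ^ 2 - ⟪u, v⟫ ^ 2) / (2 * Real.sqrt (A2 td ts u v))
    - Real.sqrt (A2 td ts u v))

theorem stmt18 {n : ℕ} (ρ td ts : ℝ) (u v : EuclideanSpace ℝ (Fin n))
    (hρ : 0 < ρ) (hA : 0 < A2 td ts u v)
    (M : Matrix (Fin 2) (Fin 2) ℝ) (hM : M.det ≠ 0) :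
    Lns ρ (M 0 0 * td + M 0 1 * ts) (M 1 0 * td + M 1 1 * ts)
        (M 0 0 • u + M 0 1 • v) (M 1 0 • u + M 1 1 • v)
      = |M.det| * Lns ρ td ts u v := by
  have hdet : M.det = M 0 0 * M 1 1 - M 0 1 * M 1 0 := Matrix.det_fin_two M
  set a := M 0 0; set b := M 0 1; set c := M 1 0; set d := M 1 1
  have hnu : ‖a • u + b • v‖ ^ 2
      = a ^ 2 * ‖u‖ ^ 2 + 2 * (a * b) * ⟪u, v⟫ + b ^ 2 * ‖v‖ ^ 2 := by
    rw [norm_add_sq_real, real_inner_smul_left, real_inner_smul_right,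
      norm_smul, norm_smul]
    simp only [Real.norm_eq_abs, mul_pow, sq_abs]
    ring
  have hnv : ‖c • u + d • v‖ ^ 2
      = c ^ 2 * ‖u‖ ^ 2 + 2 * (c * d) * ⟪u, v⟫ + d ^ 2 * ‖v‖ ^ 2 := by
    rw [norm_add_sq_real, real_inner_smul_left, real_inner_smul_right,
      norm_smul, norm_smul]
    simp only [Real.norm_eq_abs, mul_pow, sq_abs]
    ring
  have hin : ⟪a • u + b • v, c • u + d • v⟫
      = a * c * ‖u‖ ^ 2 + (a * d + b * c) * ⟪u, v⟫ + b * d * ‖v‖ ^ 2 := by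
    rw [inner_add_left, inner_add_right, inner_add_right,
      real_inner_smul_left, real_inner_smul_left, real_inner_smul_left,
      real_inner_smul_left, real_inner_smul_right, real_inner_smul_right,
      real_inner_smul_right, real_inner_smul_right,
      real_inner_self_eq_norm_sq u, real_inner_self_eq_norm_sq v,
      real_inner_comm v u]
    ring
  have hA2 : A2 (a * td + b * ts) (c * td + d * ts) (a • u + b • v) (c • u + d • v)
      = M.det ^ 2 * A2 td ts u v := by
    simp only [A2, hnu, hnv, hin, hdet]
    ring
  have hG : ‖a • u + b • v‖ ^ 2 * ‖c • u + d • v‖ ^ 2 - ⟪a • u + b • v, c • u + d • v⟫ ^ 2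
      = M.det ^ 2 * (‖u‖ ^ 2 * ‖v‖ ^ 2 - ⟪u, v⟫ ^ 2) := by
    rw [hnu, hnv, hin, hdet]
    ring
  have hs : Real.sqrt (A2 td ts u v) ≠ 0 := by positivity
  have hsqrt : Real.sqrt (M.det ^ 2 * A2 td ts u v)
      = |M.det| * Real.sqrt (A2 td ts u v) := by
    rw [Real.sqrt_mul (sq_nonneg _), Real.sqrt_sq_eq_abs]
  have habs : |M.det| ≠ 0 := abs_ne_zero.mpr hM
  simp only [Lns, hA2, hG, hsqrt]
  field_simp
  rw [← sq_abs M.det]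
  ring
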